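/- arXiv:1612.01571 — 9 statements merged into one kernel-verified Lean document; each statement's English description precedes it below -/
import Mathlib

section
/- Suppose M, S, G : ℝ → ℝ and D : ℝ → ℝ are differentiable, nonnegative functions satisfying the delayed RNAi system for all t ≥ 0, and suppose there exist T > 0 and D̂ > 0 such that D(t) ≤ D̂ for all t ≥ T. Then there exist constants M̂, Ŝ, Ĝ > 0 such that M(t) ≤ M̂, S(t) ≤ Ŝ and G(t) ≤ Ĝ for all t ≥ T. -/
/-! Since all loss terms are nonnegative, each of `M`, `S`, `G` obeys a linear differential
inequality `f' ≤ c - k f` on `[T, ∞)`, with `k` its own decay rate; by Grönwall such an `f`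
stays below `max (f T) (c / k)`. The production constant is `n1 h` for `M`, then
`n2 a D̂` for `S`, and finally `n3 b1 Ŝ M̂` for `G`, using the bounds already found. -/

open Real

lemma gronwallBound_le_max_of_neg {δ K ε x : ℝ} (hK : K < 0) (hx : 0 ≤ x) :
    gronwallBound δ K ε x ≤ max δ (-ε / K) := by
  rw [gronwallBound_of_K_ne_0 hK.ne]
  set w := exp (K * x)
  have hw0 : 0 ≤ w := (exp_pos _).le
  have hw1 : w ≤ 1 := exp_le_one_iff.mpr (mul_nonpos_of_nonpos_of_nonneg hK.le hx)
  calc δ * w + ε / K * (w - 1) = w * δ + (1 - w) * (-ε / K) := by ring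
    _ ≤ w * max δ (-ε / K) + (1 - w) * max δ (-ε / K) :=
        add_le_add (mul_le_mul_of_nonneg_left (le_max_left _ _) hw0)
          (mul_le_mul_of_nonneg_left (le_max_right _ _) (sub_nonneg.mpr hw1))
    _ = max δ (-ε / K) := by ring

lemma le_max_of_deriv_le_sub_mul {f : ℝ → ℝ} (hf : Differentiable ℝ f) {k c T : ℝ}
    (hk : 0 < k) (hf' : ∀ t, T ≤ t → deriv f t ≤ c - k * f t) :
    ∀ t, T ≤ t → f t ≤ max (f T) (c / k) := by
  intro t ht
  calc f t ≤ gronwallBound (f T) (-k) c (t - T) :=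
        le_gronwallBound_of_liminf_deriv_right_le hf.continuous.continuousOn
          (fun x _ _ hr => (hf x).hasDerivAt.hasDerivWithinAt.liminf_right_slope_le hr) le_rfl
          (fun x hx => by linarith [hf' x hx.1]) t ⟨ht, le_rfl⟩
    _ ≤ max (f T) (-c / -k) := gronwallBound_le_max_of_neg (neg_neg_of_pos hk) (sub_nonneg.mpr ht)
    _ = max (f T) (c / k) := by rw [neg_div_neg_eq]

theorem rnai_boundedness_general
    (h p a b1 b2 b3 dm ds dg n1 n2 n3 : ℝ)
    (hh : 0 < h) (hp : 0 < p) (ha : 0 < a) (hb1 : 0 < b1) (hb2 : 0 < b2)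
    (hb3 : 0 < b3) (hdm : 0 < dm) (hds : 0 < ds) (hdg : 0 < dg)
    (hn1 : 0 < n1) (hn2 : 0 < n2) (hn3 : 0 < n3)
    (M D S G : ℝ → ℝ)
    (hMdiff : Differentiable ℝ M)
    (hSdiff : Differentiable ℝ S) (hGdiff : Differentiable ℝ G)
    (hMnn : ∀ t, 0 ≤ M t)
    (hSnn : ∀ t, 0 ≤ S t) (hGnn : ∀ t, 0 ≤ G t)
    (heqM : ∀ t, 0 ≤ t →
      deriv M t = n1 * h - dm * M t - p * M t - b1 * S t * M t - b2 * S t * M t)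
    (heqS : ∀ t, 0 ≤ t →
      deriv S t = n2 * a * D t - ds * S t - b1 * S t * M t - b2 * S t * M t
        - b3 * S t * G t)
    (heqG : ∀ t, 0 ≤ t →
      deriv G t = n3 * b1 * S t * M t - dg * G t - b3 * S t * G t)
    (T Dhat : ℝ) (hT : 0 < T) (hDhat : 0 < Dhat)
    (hDbdd : ∀ t, T ≤ t → D t ≤ Dhat) :
    ∃ Mhat Shat Ghat : ℝ, 0 < Mhat ∧ 0 < Shat ∧ 0 < Ghat ∧
      ∀ t, T ≤ t → M t ≤ Mhat ∧ S t ≤ Shat ∧ G t ≤ Ghat := by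
  set Mhat := max (M T) (n1 * h / dm)
  set Shat := max (S T) (n2 * a * Dhat / ds)
  have hMhat : 0 < Mhat := lt_max_of_lt_right (by positivity)
  have hShat : 0 < Shat := lt_max_of_lt_right (by positivity)
  have hM : ∀ t, T ≤ t → M t ≤ Mhat := le_max_of_deriv_le_sub_mul hMdiff hdm fun t ht => by
    rw [heqM t (hT.le.trans ht)]
    nlinarith [hMnn t, mul_nonneg (hSnn t) (hMnn t)]
  have hS : ∀ t, T ≤ t → S t ≤ Shat := le_max_of_deriv_le_sub_mul hSdiff hds fun t ht => by
    rw [heqS t (hT.le.trans ht)]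
    nlinarith [mul_le_mul_of_nonneg_left (hDbdd t ht) (by positivity : 0 ≤ n2 * a),
      mul_nonneg (hSnn t) (hMnn t), mul_nonneg (hSnn t) (hGnn t)]
  have hG := le_max_of_deriv_le_sub_mul hGdiff hdg (c := n3 * b1 * Shat * Mhat) fun t ht => by
    rw [heqG t (hT.le.trans ht)]
    have hSM : S t * M t ≤ Shat * Mhat := mul_le_mul (hS t ht) (hM t ht) (hMnn t) hShat.le
    nlinarith [mul_le_mul_of_nonneg_left hSM (by positivity : 0 ≤ n3 * b1),
      mul_nonneg (hSnn t) (hGnn t)]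
  exact ⟨Mhat, Shat, _, hMhat, hShat, lt_max_of_lt_right (by positivity),
    fun t ht => ⟨hM t ht, hS t ht, hG t ht⟩⟩

/-- If the nonnegative differentiable solutions of the delayed RNAi
system have `D` bounded by `D̂` for `t ≥ T`, then `M`, `S` and `G` are bounded for
`t ≥ T`. -/
theorem rnai_boundedness
    (h p a b1 b2 b3 dm ds dg n1 n2 n3 τ1 τ2 : ℝ)
    (hh : 0 < h) (hp : 0 < p) (ha : 0 < a) (hb1 : 0 < b1) (hb2 : 0 < b2)
    (hb3 : 0 < b3) (hdm : 0 < dm) (hds : 0 < ds) (hdg : 0 < dg)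
    (hn1 : 0 < n1) (hn2 : 0 < n2) (hn3 : 0 < n3)
    (hτ1 : 0 ≤ τ1) (hτ2 : 0 ≤ τ2)
    (M D S G : ℝ → ℝ)
    (hMdiff : Differentiable ℝ M) (hDdiff : Differentiable ℝ D)
    (hSdiff : Differentiable ℝ S) (hGdiff : Differentiable ℝ G)
    (hMnn : ∀ t, 0 ≤ M t) (hDnn : ∀ t, 0 ≤ D t)
    (hSnn : ∀ t, 0 ≤ S t) (hGnn : ∀ t, 0 ≤ G t)
    (heqM : ∀ t, 0 ≤ t →
      deriv M t = n1 * h - dm * M t - p * M t - b1 * S t * M t - b2 * S t * M t)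
    (heqD : ∀ t, 0 ≤ t →
      deriv D t = p * M t - a * D t + b2 * S (t - τ1) * M (t - τ1)
        + b3 * S (t - τ2) * G (t - τ2))
    (heqS : ∀ t, 0 ≤ t →
      deriv S t = n2 * a * D t - ds * S t - b1 * S t * M t - b2 * S t * M t
        - b3 * S t * G t)
    (heqG : ∀ t, 0 ≤ t →
      deriv G t = n3 * b1 * S t * M t - dg * G t - b3 * S t * G t)
    (T Dhat : ℝ) (hT : 0 < T) (hDhat : 0 < Dhat)
    (hDbdd : ∀ t, T ≤ t → D t ≤ Dhat) :
    ∃ Mhat Shat Ghat : ℝ, 0 < Mhat ∧ 0 < Shat ∧ 0 < Ghat ∧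
      ∀ t, T ≤ t → M t ≤ Mhat ∧ S t ≤ Shat ∧ G t ≤ Ghat :=
  rnai_boundedness_general h p a b1 b2 b3 dm ds dg n1 n2 n3 hh hp ha hb1 hb2 hb3 hdm hds hdg hn1 hn2
    hn3 M D S G hMdiff hSdiff hGdiff hMnn hSnn hGnn heqM heqS heqG T Dhat hT hDhat hDbdd
end

section
/- The steady-state system of the RNAi model admits no nonnegative solution (M, D, S, G) with S = 0, and no nonnegative solution with D = 0. (If S = 0, equation (iii) forces D = 0, and then equation (ii) forces M = 0, contradicting equation (i); similarly D = 0 forces S = 0 and hence M = 0.) -/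
/-- The steady-state system of the RNAi model admits no
nonnegative solution with `S = 0`, and none with `D = 0`. -/
theorem no_steady_state_with_S_or_D_zero
    (h p a b1 b2 b3 dm ds dg n1 n2 n3 : ℝ)
    (hh : 0 < h) (hp : 0 < p) (ha : 0 < a) (hb1 : 0 < b1) (hb2 : 0 < b2)
    (hb3 : 0 < b3) (hdm : 0 < dm) (hds : 0 < ds) (hdg : 0 < dg)
    (hn1 : 0 < n1) (hn2 : 0 < n2) (hn3 : 0 < n3)
    (M D S G : ℝ)
    (hM : 0 ≤ M) (hD : 0 ≤ D) (hS : 0 ≤ S) (hG : 0 ≤ G)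
    (eq1 : n1 * h - dm * M - p * M - b1 * S * M - b2 * S * M = 0)
    (eq2 : p * M - a * D + b2 * S * M + b3 * S * G = 0)
    (eq3 : n2 * a * D - ds * S - b1 * S * M - b2 * S * M - b3 * S * G = 0)
    (eq4 : n3 * b1 * S * M - dg * G - b3 * S * G = 0) :
    S ≠ 0 ∧ D ≠ 0 := by
  constructor
  · rintro rfl
    simp only [mul_zero, zero_mul, sub_zero, add_zero] at eq1 eq2 eq3
    have hD0 : D = 0 := by
      rcases hD.lt_or_eq with hlt | he
      · nlinarith [mul_pos (mul_pos hn2 ha) hlt]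
      · exact he.symm
    have hM0 : M = 0 := by nlinarith
    nlinarith [mul_pos hn1 hh]
  · rintro rfl
    have hM0 : M = 0 := by
      nlinarith [mul_nonneg (mul_nonneg hb2.le hS) hM, mul_nonneg (mul_nonneg hb3.le hS) hG]
    subst hM0
    nlinarith [mul_pos hn1 hh, mul_nonneg (mul_nonneg hb1.le hS) hM]
end

section
/- The steady-state system of the RNAi model admits no nonnegative solution (M, D, S, G) with G = 0. Consequently, every nonnegative steady state of the system has all four components strictly positive. -/
/-- The steady-state system of the RNAi model admits no
nonnegative solution with `G = 0`; consequently every nonnegative steady state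
has all four components strictly positive. -/
theorem steady_state_all_positive
    (h p a b1 b2 b3 dm ds dg n1 n2 n3 : ℝ)
    (hh : 0 < h) (hp : 0 < p) (ha : 0 < a) (hb1 : 0 < b1) (hb2 : 0 < b2)
    (hb3 : 0 < b3) (hdm : 0 < dm) (hds : 0 < ds) (hdg : 0 < dg)
    (hn1 : 0 < n1) (hn2 : 0 < n2) (hn3 : 0 < n3)
    (M D S G : ℝ)
    (hM : 0 ≤ M) (hD : 0 ≤ D) (hS : 0 ≤ S) (hG : 0 ≤ G)
    (eq1 : n1 * h - dm * M - p * M - b1 * S * M - b2 * S * M = 0)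
    (eq2 : p * M - a * D + b2 * S * M + b3 * S * G = 0)
    (eq3 : n2 * a * D - ds * S - b1 * S * M - b2 * S * M - b3 * S * G = 0)
    (eq4 : n3 * b1 * S * M - dg * G - b3 * S * G = 0) :
    G ≠ 0 ∧ 0 < M ∧ 0 < D ∧ 0 < S ∧ 0 < G := by
  have hMpos : 0 < M := by
    rcases hM.lt_or_eq with h' | h'
    · exact h'
    · exfalso; rw [← h'] at eq1; nlinarith [mul_pos hn1 hh]
  have hDpos : 0 < D := by
    nlinarith [mul_pos hp hMpos, mul_nonneg (mul_nonneg hb2.le hS) hM,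
      mul_nonneg (mul_nonneg hb3.le hS) hG]
  have hSpos : 0 < S := by
    rcases hS.lt_or_eq with h' | h'
    · exact h'
    · exfalso; rw [← h'] at eq3
      nlinarith [mul_pos (mul_pos hn2 ha) hDpos]
  have hGpos : 0 < G := by
    rcases hG.lt_or_eq with h' | h'
    · exact h'
    · exfalso; rw [← h'] at eq4
      nlinarith [mul_pos (mul_pos (mul_pos hn3 hb1) hSpos) hMpos]
  exact ⟨hGpos.ne', hMpos, hDpos, hSpos, hGpos⟩
end

section
/- Assume n2 > 1. If (M, D, S, G) is a nonnegative solution of the steady-state system of the RNAi model, then D = [b·ds·S² + (ĥ·b1 + ds·(p + dm))·S − p·ĥ] / [a·(n2 − 1)·(p + dm + b·S)], where b = b1 + b2 and ĥ = n1·h. (This follows by adding equations (ii) and (iii) and substituting M = ĥ/(p + dm + b·S).) -/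
/-- For `n2 > 1`, every nonnegative steady state of the RNAi
model satisfies
`D = [b·ds·S² + (ĥ·b1 + ds·(p+dm))·S − p·ĥ] / [a·(n2−1)·(p+dm+b·S)]`
with `b = b1 + b2`, `ĥ = n1·h`. -/
theorem steady_state_D_formula
    (h p a b1 b2 b3 dm ds dg n1 n2 n3 : ℝ)
    (hh : 0 < h) (hp : 0 < p) (ha : 0 < a) (hb1 : 0 < b1) (hb2 : 0 < b2)
    (hb3 : 0 < b3) (hdm : 0 < dm) (hds : 0 < ds) (hdg : 0 < dg)
    (hn1 : 0 < n1) (hn2 : 1 < n2) (hn3 : 0 < n3)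
    (M D S G : ℝ)
    (hM : 0 ≤ M) (hD : 0 ≤ D) (hS : 0 ≤ S) (hG : 0 ≤ G)
    (eq1 : n1 * h - dm * M - p * M - b1 * S * M - b2 * S * M = 0)
    (eq2 : p * M - a * D + b2 * S * M + b3 * S * G = 0)
    (eq3 : n2 * a * D - ds * S - b1 * S * M - b2 * S * M - b3 * S * G = 0)
    (eq4 : n3 * b1 * S * M - dg * G - b3 * S * G = 0) :
    D = ((b1 + b2) * ds * S ^ 2 + (n1 * h * b1 + ds * (p + dm)) * S - p * (n1 * h))
        / (a * (n2 - 1) * (p + dm + (b1 + b2) * S)) := by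
  have hden : a * (n2 - 1) * (p + dm + (b1 + b2) * S) ≠ 0 := by
    have : 0 < p + dm + (b1 + b2) * S := by positivity
    have h2 : 0 < n2 - 1 := by linarith
    positivity
  rw [eq_div_iff hden]
  linear_combination (p + dm + (b1 + b2) * S) * eq2 + (p + dm + (b1 + b2) * S) * eq3 + (p - b1 * S) * eq1
end

section
/- Assume n2 > 1 and let S > 0. Define M(S) = ĥ/(p + dm + b·S), D(S) = [b·ds·S² + (ĥ·b1 + ds·(p + dm))·S − p·ĥ]/[a·(n2 − 1)·(p + dm + b·S)] and G(S) = ĥ·n3·b1·S/[(p + dm + b·S)·(b3·S + dg)]. Then (M(S), D(S), S, G(S)) solves the steady-state system of the RNAi model if and only if Q(S) = 0, where Q(S) = α3·S³ + α2·S² + α1·S + α0 with α0 = −ĥ·p·dg·n2, α1 = ĥ·[dg·b − n2·(p·b3 + dg·b2)] + dg·ds·(p + dm), α2 = ĥ·[b1·b3·(1 + n3 − n2·n3) + b2·b3·(1 − n2)] + b3·ds·(p + dm) + b·dg·ds, and α3 = b·b3·ds. -/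
set_option maxRecDepth 8000 in
set_option linter.unusedVariables false in
set_option maxHeartbeats 1600000 in
/-- For `n2 > 1` and `S > 0`, the quadruple
`(M(S), D(S), S, G(S))` given by the explicit formulas solves the steady-state
system of the RNAi model if and only if `Q(S) = 0`, where `Q` is the
steady-state cubic. -/
theorem steady_state_iff_cubic
    (h p a b1 b2 b3 dm ds dg n1 n2 n3 : ℝ)
    (hh : 0 < h) (hp : 0 < p) (ha : 0 < a) (hb1 : 0 < b1) (hb2 : 0 < b2)
    (hb3 : 0 < b3) (hdm : 0 < dm) (hds : 0 < ds) (hdg : 0 < dg)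
    (hn1 : 0 < n1) (hn2 : 1 < n2) (hn3 : 0 < n3)
    (S : ℝ) (hS : 0 < S)
    (M D G : ℝ)
    (hMdef : M = (n1 * h) / (p + dm + (b1 + b2) * S))
    (hDdef : D = ((b1 + b2) * ds * S ^ 2 + (n1 * h * b1 + ds * (p + dm)) * S
          - p * (n1 * h)) / (a * (n2 - 1) * (p + dm + (b1 + b2) * S)))
    (hGdef : G = (n1 * h) * n3 * b1 * S
          / ((p + dm + (b1 + b2) * S) * (b3 * S + dg))) :
    (n1 * h - dm * M - p * M - b1 * S * M - b2 * S * M = 0 ∧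
     p * M - a * D + b2 * S * M + b3 * S * G = 0 ∧
     n2 * a * D - ds * S - b1 * S * M - b2 * S * M - b3 * S * G = 0 ∧
     n3 * b1 * S * M - dg * G - b3 * S * G = 0)
    ↔
    ((b1 + b2) * b3 * ds) * S ^ 3
      + ((n1 * h) * (b1 * b3 * (1 + n3 - n2 * n3) + b2 * b3 * (1 - n2))
          + b3 * ds * (p + dm) + (b1 + b2) * dg * ds) * S ^ 2
      + ((n1 * h) * (dg * (b1 + b2) - n2 * (p * b3 + dg * b2))
          + dg * ds * (p + dm)) * S
      + (-(n1 * h) * p * dg * n2) = 0 := by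
  have hd1 : (0:ℝ) < p + dm + (b1 + b2) * S := by positivity
  have hd2 : (0:ℝ) < b3 * S + dg := by positivity
  have hn2' : (0:ℝ) < n2 - 1 := by linarith
  have hd1' : p + dm + (b1 + b2) * S ≠ 0 := ne_of_gt hd1
  have hd2' : b3 * S + dg ≠ 0 := ne_of_gt hd2
  have hn2'' : n2 - 1 ≠ 0 := ne_of_gt hn2'
  have ha' : a ≠ 0 := ne_of_gt ha
  have hden : (n2 - 1) * ((p + dm + (b1 + b2) * S) * (b3 * S + dg)) ≠ 0 :=
    mul_ne_zero hn2'' (mul_ne_zero hd1' hd2')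
  have key1 : n1 * h - dm * M - p * M - b1 * S * M - b2 * S * M = 0 := by
    rw [hMdef]; field_simp; ring
  have key4 : n3 * b1 * S * M - dg * G - b3 * S * G = 0 := by
    rw [hMdef, hGdef]; field_simp; ring
  have key2 : (p * M - a * D + b2 * S * M + b3 * S * G)
      * ((n2 - 1) * ((p + dm + (b1 + b2) * S) * (b3 * S + dg)))
      = -(((b1 + b2) * b3 * ds) * S ^ 3
      + ((n1 * h) * (b1 * b3 * (1 + n3 - n2 * n3) + b2 * b3 * (1 - n2))
          + b3 * ds * (p + dm) + (b1 + b2) * dg * ds) * S ^ 2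
      + ((n1 * h) * (dg * (b1 + b2) - n2 * (p * b3 + dg * b2))
          + dg * ds * (p + dm)) * S
      + (-(n1 * h) * p * dg * n2)) := by
    rw [hMdef, hDdef, hGdef]; field_simp; ring
  have key3 : (n2 * a * D - ds * S - b1 * S * M - b2 * S * M - b3 * S * G)
      * ((n2 - 1) * ((p + dm + (b1 + b2) * S) * (b3 * S + dg)))
      = (((b1 + b2) * b3 * ds) * S ^ 3
      + ((n1 * h) * (b1 * b3 * (1 + n3 - n2 * n3) + b2 * b3 * (1 - n2))
          + b3 * ds * (p + dm) + (b1 + b2) * dg * ds) * S ^ 2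
      + ((n1 * h) * (dg * (b1 + b2) - n2 * (p * b3 + dg * b2))
          + dg * ds * (p + dm)) * S
      + (-(n1 * h) * p * dg * n2)) := by
    rw [hMdef, hDdef, hGdef]; field_simp; ring
  constructor
  · rintro ⟨-, h2, -, -⟩
    rw [h2, zero_mul] at key2
    linarith
  · intro hQ
    rw [hQ] at key2 key3
    refine ⟨key1, ?_, ?_, key4⟩
    · have := mul_eq_zero.mp (by linarith : (p * M - a * D + b2 * S * M + b3 * S * G)
        * ((n2 - 1) * ((p + dm + (b1 + b2) * S) * (b3 * S + dg))) = 0)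
      tauto
    · have := mul_eq_zero.mp key3
      tauto
end

section
/- Let α, βn, γn, δn, β̂m, γ̂m, δ̂m be real numbers, let τ ≥ 0, and let ω > 0. If λ = i·ω is a root of the characteristic quasi-polynomial λ⁴ + α·λ³ + (βn·e^{−λτ} + β̂m)·λ² + (γn·e^{−λτ} + γ̂m)·λ + (δn·e^{−λτ} + δ̂m) = 0, then (a) the pair of real equations ω·γn·sin(ωτ) + (δn − ω²·βn)·cos(ωτ) = ω²·(β̂m − ω²) − δ̂m and ω·γn·cos(ωτ) − (δn − ω²·βn)·sin(ωτ) = ω·(α·ω² − γ̂m) holds, and (b) v = ω² satisfies the quartic v⁴ + c3·v³ + c2·v² + c1·v + c0 = 0, where c0 = δ̂m² − δn², c1 = 2·(βn·δn − β̂m·δ̂m) + γ̂m² − γn², c2 = 2·(δ̂m − α·γ̂m) + β̂m² − βn², c3 = α² − 2·β̂m. -/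
open Complex in
/-- If `λ = i·ω` (with `ω > 0`) is a root of the single-delay
characteristic quasi-polynomial, then the pair of real trigonometric equations
holds, and `v = ω²` satisfies the Hopf-frequency quartic. -/
theorem purely_imaginary_root_conditions
    (α βn γn δn βm γm δm τ ω : ℝ)
    (hτ : 0 ≤ τ) (hω : 0 < ω)
    (hroot :
      ((ω : ℂ) * I) ^ 4 + (α : ℂ) * ((ω : ℂ) * I) ^ 3
        + ((βn : ℂ) * Complex.exp (-((ω : ℂ) * I) * τ) + (βm : ℂ)) * ((ω : ℂ) * I) ^ 2
        + ((γn : ℂ) * Complex.exp (-((ω : ℂ) * I) * τ) + (γm : ℂ)) * ((ω : ℂ) * I)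
        + ((δn : ℂ) * Complex.exp (-((ω : ℂ) * I) * τ) + (δm : ℂ)) = 0) :
    (ω * γn * Real.sin (ω * τ) + (δn - ω ^ 2 * βn) * Real.cos (ω * τ)
        = ω ^ 2 * (βm - ω ^ 2) - δm ∧
     ω * γn * Real.cos (ω * τ) - (δn - ω ^ 2 * βn) * Real.sin (ω * τ)
        = ω * (α * ω ^ 2 - γm)) ∧
    (ω ^ 2) ^ 4 + (α ^ 2 - 2 * βm) * (ω ^ 2) ^ 3
      + (2 * (δm - α * γm) + βm ^ 2 - βn ^ 2) * (ω ^ 2) ^ 2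
      + (2 * (βn * δn - βm * δm) + γm ^ 2 - γn ^ 2) * (ω ^ 2)
      + (δm ^ 2 - δn ^ 2) = 0 := by

  have hexp : Complex.exp (-((ω : ℂ) * I) * τ)
      = (Real.cos (ω * τ) : ℂ) - (Real.sin (ω * τ) : ℂ) * I := by
    rw [show -((ω : ℂ) * I) * τ = ((-(ω * τ) : ℝ) : ℂ) * I by push_cast; ring,
      Complex.exp_mul_I]
    rw [← Complex.ofReal_cos, ← Complex.ofReal_sin, Real.cos_neg, Real.sin_neg]
    push_cast
    ring
  rw [hexp] at hroot
  have h1 := congrArg Complex.re hroot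
  have h2 := congrArg Complex.im hroot
  simp only [pow_succ, pow_zero, one_mul, Complex.add_re, Complex.add_im,
    Complex.mul_re, Complex.mul_im, Complex.sub_re, Complex.sub_im,
    Complex.ofReal_re, Complex.ofReal_im, Complex.I_re, Complex.I_im,
    Complex.zero_re, Complex.zero_im, mul_zero, mul_one, zero_mul, sub_zero,
    zero_sub, add_zero, zero_add, neg_zero, neg_neg] at h1 h2
  have hsc : Real.sin (ω * τ) ^ 2 + Real.cos (ω * τ) ^ 2 = 1 :=
    Real.sin_sq_add_cos_sq _
  have e1 : ω * γn * Real.sin (ω * τ) + (δn - ω ^ 2 * βn) * Real.cos (ω * τ)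
      = ω ^ 2 * (βm - ω ^ 2) - δm := by linear_combination h1
  have e2 : ω * γn * Real.cos (ω * τ) - (δn - ω ^ 2 * βn) * Real.sin (ω * τ)
      = ω * (α * ω ^ 2 - γm) := by linear_combination h2
  refine ⟨⟨e1, e2⟩, ?_⟩
  linear_combination
    (-(ω * γn * Real.sin (ω * τ) + (δn - ω ^ 2 * βn) * Real.cos (ω * τ))
      - (ω ^ 2 * (βm - ω ^ 2) - δm)) * e1
    + (-(ω * γn * Real.cos (ω * τ) - (δn - ω ^ 2 * βn) * Real.sin (ω * τ))
      - ω * (α * ω ^ 2 - γm)) * e2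
    + (ω ^ 2 * γn ^ 2 + (δn - ω ^ 2 * βn) ^ 2) * hsc
end

section
/- Let α, βn, γn, δn, β̂m, γ̂m, δ̂m be real numbers, τ ∈ ℝ and ω > 0, and set F1 = ω·γn, F2 = δn − ω²·βn, H1 = ω²·(β̂m − ω²) − δ̂m, H2 = ω·(α·ω² − γ̂m), A = 2·ω²·(β̂m − 2·ω²)·F2 + ω·(3·α·ω² − γ̂m)·F1, B = −ω·(3·α·ω² − γ̂m)·F2 + 2·ω²·(β̂m − 2·ω²)·F1. Suppose the equations F1·sin(ωτ) + F2·cos(ωτ) = H1 and F1·cos(ωτ) − F2·sin(ωτ) = H2 hold. Then A·cos(ωτ) + B·sin(ωτ) + 2·βn·ω²·(δn − βn·ω²) − γn²·ω² = 4·ω⁸ + 3·c3·ω⁶ + 2·c2·ω⁴ + c1·ω², where c1 = 2·(βn·δn − β̂m·δ̂m) + γ̂m² − γn², c2 = 2·(δ̂m − α·γ̂m) + β̂m² − βn², c3 = α² − 2·β̂m. Equivalently, with v = ω² and h(v) = v⁴ + c3·v³ + c2·v² + c1·v + c0, the left-hand side equals v·h'(v). -/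
/-- The key transversality identity in the Hopf-bifurcation
analysis with a single delay: the quantity
`A·cos(ωτ) + B·sin(ωτ) + 2·βn·ω²·(δn − βn·ω²) − γn²·ω²` equals
`4·ω⁸ + 3·c3·ω⁶ + 2·c2·ω⁴ + c1·ω²`, i.e. `v·h'(v)` with `v = ω²`. -/
theorem transversality_identity
    (α βn γn δn βm γm δm τ ω : ℝ) (hω : 0 < ω) :
    let F1 := ω * γn
    let F2 := δn - ω ^ 2 * βn
    let H1 := ω ^ 2 * (βm - ω ^ 2) - δm
    let H2 := ω * (α * ω ^ 2 - γm)
    let A := 2 * ω ^ 2 * (βm - 2 * ω ^ 2) * F2 + ω * (3 * α * ω ^ 2 - γm) * F1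
    let B := -(ω * (3 * α * ω ^ 2 - γm)) * F2 + 2 * ω ^ 2 * (βm - 2 * ω ^ 2) * F1
    let c1 := 2 * (βn * δn - βm * δm) + γm ^ 2 - γn ^ 2
    let c2 := 2 * (δm - α * γm) + βm ^ 2 - βn ^ 2
    let c3 := α ^ 2 - 2 * βm
    F1 * Real.sin (ω * τ) + F2 * Real.cos (ω * τ) = H1 →
    F1 * Real.cos (ω * τ) - F2 * Real.sin (ω * τ) = H2 →
    (A * Real.cos (ω * τ) + B * Real.sin (ω * τ)
        + 2 * βn * ω ^ 2 * (δn - βn * ω ^ 2) - γn ^ 2 * ω ^ 2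
      = 4 * ω ^ 8 + 3 * c3 * ω ^ 6 + 2 * c2 * ω ^ 4 + c1 * ω ^ 2) ∧
    (A * Real.cos (ω * τ) + B * Real.sin (ω * τ)
        + 2 * βn * ω ^ 2 * (δn - βn * ω ^ 2) - γn ^ 2 * ω ^ 2
      = ω ^ 2 * (4 * (ω ^ 2) ^ 3 + 3 * c3 * (ω ^ 2) ^ 2 + 2 * c2 * (ω ^ 2) + c1)) := by
  intro F1 F2 H1 H2 A B c1 c2 c3 h1 h2
  constructor <;>
  · simp only [F1, F2, H1, H2, A, B, c1, c2, c3] at *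
    linear_combination (2 * ω ^ 2 * (βm - 2 * ω ^ 2)) * h1 + (ω * (3 * α * ω ^ 2 - γm)) * h2
end

section
/- Let δ1, δ2 be complex numbers and ω > 0 a real number. There exist real numbers τ1 ≥ 0 and τ2 ≥ 0 such that 1 + δ1·e^{−iωτ1} + δ2·e^{−iωτ2} = 0 if and only if |δ1| + |δ2| ≥ 1 and −1 ≤ |δ1| − |δ2| ≤ 1. -/
/-!
Writing `uₖ = δₖ e^{-iωτₖ}`, the equation says that `1, u₁, u₂` sum to zero, i.e. they are the sides
of a (possibly degenerate) triangle with side lengths `1, |δ₁|, |δ₂|`; the stated conditions are the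
triangle inequalities. Conversely, the intermediate value theorem produces such a triangle, and since
`ω > 0` the factor `e^{-iωτ}` sweeps the whole unit circle as `τ` ranges over `[0, 2π/ω]`, so each
side can be rotated into `δₖ e^{-iωτₖ}`.
-/

open Complex

theorem norm_le_add_and_abs_sub_le_of_add_add_eq_zero {E : Type*} [SeminormedAddCommGroup E]
    {x a b : E} (h : x + a + b = 0) : ‖x‖ ≤ ‖a‖ + ‖b‖ ∧ |‖a‖ - ‖b‖| ≤ ‖x‖ := by
  have hx : x = -(a + b) := by rw [← sub_eq_zero, sub_neg_eq_add, ← add_assoc, h]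
  refine ⟨?_, ?_⟩
  · rw [hx, norm_neg]
    exact norm_add_le a b
  · calc |‖a‖ - ‖b‖| = |‖a‖ - ‖-b‖| := by rw [norm_neg]
      _ ≤ ‖a - -b‖ := abs_norm_sub_norm_le a (-b)
      _ = ‖x‖ := by rw [hx, norm_neg, sub_neg_eq_add]

theorem exists_norm_one_add_mul_exp_eq {r s : ℝ} (hr : 0 ≤ r) (hs : s ∈ Set.Icc |1 - r| (1 + r)) :
    ∃ t : ℝ, ‖1 + r * exp (t * I)‖ = s := by
  let g : ℝ → ℝ := fun t => ‖1 + r * exp (t * I)‖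
  have hg0 : g 0 = 1 + r := by
    simp only [g, ofReal_zero, zero_mul, exp_zero, mul_one]
    exact_mod_cast abs_of_nonneg (by linarith : (0 : ℝ) ≤ 1 + r)
  have hgπ : g Real.pi = |1 - r| := by
    simp only [g, exp_pi_mul_I, mul_neg_one, ← sub_eq_add_neg]
    exact_mod_cast rfl
  obtain ⟨t, -, ht⟩ := intermediate_value_Icc' Real.pi_pos.le (by fun_prop : Continuous g).continuousOn
    (hgπ ▸ hg0 ▸ hs)
  exact ⟨t, ht⟩

theorem exists_one_add_add_eq_zero_of_abs_sub_le {r₁ r₂ : ℝ} (hr₁ : 0 ≤ r₁) (h₁ : |r₁ - r₂| ≤ 1)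
    (h₂ : 1 ≤ r₁ + r₂) : ∃ u₁ u₂ : ℂ, ‖u₁‖ = r₁ ∧ ‖u₂‖ = r₂ ∧ 1 + u₁ + u₂ = 0 := by
  have hr₂ : r₂ ∈ Set.Icc |1 - r₁| (1 + r₁) := by
    rw [abs_le] at h₁
    exact ⟨abs_le.2 ⟨by linarith, by linarith⟩, by linarith⟩
  obtain ⟨t, ht⟩ := exists_norm_one_add_mul_exp_eq hr₁ hr₂
  refine ⟨r₁ * exp (t * I), -(1 + r₁ * exp (t * I)), ?_, by rwa [norm_neg], by ring⟩
  rw [norm_mul, norm_exp_ofReal_mul_I, norm_real, Real.norm_of_nonneg hr₁, mul_one]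

theorem norm_exp_neg_I_mul_ofReal_mul (ω τ : ℝ) : ‖exp (-(I * ω * τ))‖ = 1 := by
  rw [show -(I * ω * τ) = I * ((-(ω * τ) : ℝ) : ℂ) by push_cast; ring]
  exact norm_exp_I_mul_ofReal _

theorem exists_nonneg_exp_neg_I_mul_ofReal_mul_eq {ω : ℝ} (hω : 0 < ω) {z : ℂ} (hz : ‖z‖ = 1) :
    ∃ τ : ℝ, 0 ≤ τ ∧ exp (-(I * ω * τ)) = z := by
  refine ⟨(2 * Real.pi - z.arg) / ω, div_nonneg (by linarith [arg_le_pi z, Real.pi_pos]) hω.le, ?_⟩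
  have hω' : (ω : ℂ) ≠ 0 := ofReal_ne_zero.2 hω.ne'
  calc exp (-(I * ω * ((2 * Real.pi - z.arg) / ω : ℝ)))
      = exp (z.arg * I) / exp (2 * Real.pi * I) := by
        rw [← exp_sub]; push_cast; field_simp; ring_nf
    _ = z := by
        conv_rhs => rw [← norm_mul_exp_arg_mul_I z, hz, ofReal_one, one_mul]
        rw [exp_two_pi_mul_I, div_one]

theorem exists_nonneg_mul_exp_neg_I_mul_ofReal_mul_eq {ω : ℝ} (hω : 0 < ω) {δ u : ℂ}
    (hu : ‖u‖ = ‖δ‖) : ∃ τ : ℝ, 0 ≤ τ ∧ δ * exp (-(I * ω * τ)) = u := by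
  rcases eq_or_ne δ 0 with rfl | hδ
  · exact ⟨0, le_rfl, by rw [norm_zero, norm_eq_zero] at hu; rw [hu, zero_mul]⟩
  · have hz : ‖u / δ‖ = 1 := by rw [norm_div, hu, div_self (norm_ne_zero_iff.2 hδ)]
    obtain ⟨τ, hτ, hexp⟩ := exists_nonneg_exp_neg_I_mul_ofReal_mul_eq hω hz
    exact ⟨τ, hτ, by rw [hexp, mul_div_cancel₀ _ hδ]⟩

open Complex in
/-- For `ω > 0`, there exist delays `τ1, τ2 ≥ 0` with
`1 + δ1·e^{−iωτ1} + δ2·e^{−iωτ2} = 0` if and only if the triangle conditions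
`|δ1| + |δ2| ≥ 1` and `−1 ≤ |δ1| − |δ2| ≤ 1` hold. -/
theorem crossing_set_characterization
    (δ1 δ2 : ℂ) (ω : ℝ) (hω : 0 < ω) :
    (∃ τ1 τ2 : ℝ, 0 ≤ τ1 ∧ 0 ≤ τ2 ∧
      1 + δ1 * Complex.exp (-(I * (ω : ℂ) * (τ1 : ℂ)))
        + δ2 * Complex.exp (-(I * (ω : ℂ) * (τ2 : ℂ))) = 0)
    ↔
    (1 ≤ ‖δ1‖ + ‖δ2‖ ∧
     -1 ≤ ‖δ1‖ - ‖δ2‖ ∧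
     ‖δ1‖ - ‖δ2‖ ≤ 1) := by
  rw [← abs_le]
  constructor
  · rintro ⟨τ1, τ2, -, -, h⟩
    simpa only [norm_one, norm_mul, norm_exp_neg_I_mul_ofReal_mul, mul_one] using
      norm_le_add_and_abs_sub_le_of_add_add_eq_zero h
  · rintro ⟨h₂, h₁⟩
    obtain ⟨u1, u2, hu1, hu2, hsum⟩ := exists_one_add_add_eq_zero_of_abs_sub_le (norm_nonneg δ1) h₁ h₂
    obtain ⟨τ1, hτ1, he1⟩ := exists_nonneg_mul_exp_neg_I_mul_ofReal_mul_eq hω hu1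
    obtain ⟨τ2, hτ2, he2⟩ := exists_nonneg_mul_exp_neg_I_mul_ofReal_mul_eq hω hu2
    exact ⟨τ1, τ2, hτ1, hτ2, by rw [he1, he2, hsum]⟩
end

section
/- Let ω > 0 and let δ1, δ2 be nonzero complex numbers satisfying |δ1| + |δ2| ≥ 1, −1 ≤ |δ1| − |δ2| ≤ 1. Define θ1 = arccos((1 + |δ1|² − |δ2|²)/(2·|δ1|)) and θ2 = arccos((1 + |δ2|² − |δ1|²)/(2·|δ2|)) (the triangle conditions guarantee both arccos arguments lie in [−1, 1]). Then for every choice of sign ± and all integers u, v for which τ1 = (Arg(δ1) + (2u − 1)·π ± θ1)/ω ≥ 0 and τ2 = (Arg(δ2) + (2v − 1)·π ∓ θ2)/ω ≥ 0, one has 1 + δ1·e^{−iωτ1} + δ2·e^{−iωτ2} = 0. -/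
/-!
Write `δₖ = ‖δₖ‖ e^{i arg δₖ}`. The choice of `τₖ` makes `ωτₖ` equal to `arg δₖ` plus an odd
multiple of `π` plus `±θₖ`, so `δₖ e^{-iωτₖ} = -‖δₖ‖ e^{∓iθₖ}`, and the claim becomes
`‖δ₁‖ e^{∓iθ₁} + ‖δ₂‖ e^{±iθ₂} = 1`. By the law of cosines `θ₁, θ₂` are the angles at the
endpoints of the side `[0, 1]` of the triangle with sides `1, ‖δ₁‖, ‖δ₂‖` (which exists by the
triangle conditions), and this identity says that the triangle closes up.
-/

open Complex

theorem mul_exp_neg_I_mul_of_mul_eq_arg_add_odd_pi (δ : ℂ) (ω τ x : ℝ) (n : ℤ)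
    (h : ω * τ = arg δ + (2 * n - 1) * Real.pi + x) :
    δ * exp (-(I * ω * τ)) = -‖δ‖ * exp (-x * I) := by
  have hexp : (arg δ : ℂ) * I + -(I * ω * τ)
      = -x * I + (-n : ℤ) * (2 * Real.pi * I) + Real.pi * I := by
    rw [show -(I * (ω : ℂ) * τ) = -(((ω * τ : ℝ) : ℂ) * I) by push_cast; ring, h]
    push_cast
    ring
  calc δ * exp (-(I * ω * τ)) = ‖δ‖ * exp ((arg δ : ℂ) * I + -(I * ω * τ)) := by
        rw [exp_add, ← mul_assoc, norm_mul_exp_arg_mul_I]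
    _ = -‖δ‖ * exp (-x * I) := by
        rw [hexp, exp_add, exp_add, exp_int_mul_two_pi_mul_I, exp_pi_mul_I]; ring

/-- Law of cosines: the angle between the sides `1` and `a` of a triangle with sides `1, a, b`. -/
noncomputable def triangleAngle (a b : ℝ) : ℝ :=
  Real.arccos ((1 + a ^ 2 - b ^ 2) / (2 * a))

theorem cos_triangleAngle {a b : ℝ} (ha : 0 < a) (h₁ : 1 ≤ a + b) (h₂ : -1 ≤ a - b)
    (h₃ : a - b ≤ 1) :
    Real.cos (triangleAngle a b) = (1 + a ^ 2 - b ^ 2) / (2 * a) := by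
  apply Real.cos_arccos
  · rw [le_div_iff₀ (by positivity)]
    nlinarith
  · rw [div_le_one (by positivity)]
    nlinarith

theorem mul_sin_triangleAngle {a b : ℝ} (ha : 0 < a) (hb : 0 < b) :
    a * Real.sin (triangleAngle a b) = b * Real.sin (triangleAngle b a) := by
  simp only [triangleAngle, Real.sin_arccos]
  have hmul {c : ℝ} (hc : 0 ≤ c) (x : ℝ) : c * √x = √(c ^ 2 * x) := by
    rw [Real.sqrt_mul (sq_nonneg c), Real.sqrt_sq hc]
  rw [hmul ha.le, hmul hb.le]
  congr 1
  field_simp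
  ring

theorem mul_exp_neg_triangleAngle_add_mul_exp_triangleAngle {a b : ℝ} (ha : 0 < a) (hb : 0 < b)
    (h₁ : 1 ≤ a + b) (h₂ : -1 ≤ a - b) (h₃ : a - b ≤ 1) :
    a * exp (-triangleAngle a b * I) + b * exp (triangleAngle b a * I) = 1 := by
  have hcos : a * Real.cos (triangleAngle a b) + b * Real.cos (triangleAngle b a) = 1 := by
    rw [cos_triangleAngle ha h₁ h₂ h₃,
      cos_triangleAngle hb (by linarith) (by linarith) (by linarith)]
    field_simp
    ring
  have hsin := mul_sin_triangleAngle ha hb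
  rw [← ofReal_neg, exp_mul_I, exp_mul_I, ← ofReal_cos, ← ofReal_sin, ← ofReal_cos, ← ofReal_sin,
    Real.cos_neg, Real.sin_neg]
  linear_combination (norm := skip) (congrArg ofReal hcos) - I * congrArg ofReal hsin
  push_cast
  ring

open Complex in
theorem stability_crossing_curves_general
    (δ1 δ2 : ℂ) (ω : ℝ) (hω : 0 < ω)
    (hδ1 : δ1 ≠ 0) (hδ2 : δ2 ≠ 0)
    (htri1 : 1 ≤ ‖δ1‖ + ‖δ2‖)
    (htri2 : -1 ≤ ‖δ1‖ - ‖δ2‖)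
    (htri3 : ‖δ1‖ - ‖δ2‖ ≤ 1)
    (θ1 θ2 : ℝ)
    (hθ1 : θ1 = Real.arccos
      ((1 + ‖δ1‖ ^ 2 - ‖δ2‖ ^ 2) / (2 * ‖δ1‖)))
    (hθ2 : θ2 = Real.arccos
      ((1 + ‖δ2‖ ^ 2 - ‖δ1‖ ^ 2) / (2 * ‖δ2‖)))
    (ε : ℝ) (hε : ε = 1 ∨ ε = -1)
    (u v : ℤ)
    (τ1 τ2 : ℝ)
    (hτ1def : τ1 = (Complex.arg δ1 + (2 * (u : ℝ) - 1) * Real.pi + ε * θ1) / ω)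
    (hτ2def : τ2 = (Complex.arg δ2 + (2 * (v : ℝ) - 1) * Real.pi - ε * θ2) / ω) :
    1 + δ1 * Complex.exp (-(I * (ω : ℂ) * (τ1 : ℂ)))
      + δ2 * Complex.exp (-(I * (ω : ℂ) * (τ2 : ℂ))) = 0 := by
  have hr1 : 0 < ‖δ1‖ := norm_pos_iff.mpr hδ1
  have hr2 : 0 < ‖δ2‖ := norm_pos_iff.mpr hδ2
  rw [mul_exp_neg_I_mul_of_mul_eq_arg_add_odd_pi δ1 ω τ1 (ε * θ1) u
      (by rw [hτ1def]; field_simp),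
    mul_exp_neg_I_mul_of_mul_eq_arg_add_odd_pi δ2 ω τ2 (-(ε * θ2)) v
      (by rw [hτ2def]; field_simp; ring)]
  have hθ1' : triangleAngle ‖δ1‖ ‖δ2‖ = θ1 := hθ1.symm
  have hθ2' : triangleAngle ‖δ2‖ ‖δ1‖ = θ2 := hθ2.symm
  rcases hε with rfl | rfl
  · have hclose := mul_exp_neg_triangleAngle_add_mul_exp_triangleAngle hr1 hr2 htri1 htri2 htri3
    rw [hθ1', hθ2'] at hclose
    simp only [one_mul, ofReal_neg, neg_neg]
    linear_combination -hclose
  · have hclose := mul_exp_neg_triangleAngle_add_mul_exp_triangleAngle hr2 hr1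
      (by linarith) (by linarith) (by linarith)
    rw [hθ1', hθ2'] at hclose
    simp only [neg_one_mul, neg_neg, ofReal_neg]
    linear_combination -hclose

open Complex in
/-- Parametrization of the stability crossing curves: under
the triangle conditions, for either choice of sign `ε = ±1` and any integers
`u, v` making the delays nonnegative, the delay pair
`τ1 = (Arg δ1 + (2u−1)π + ε·θ1)/ω`, `τ2 = (Arg δ2 + (2v−1)π − ε·θ2)/ω`
satisfies `1 + δ1·e^{−iωτ1} + δ2·e^{−iωτ2} = 0`. -/
theorem stability_crossing_curves
    (δ1 δ2 : ℂ) (ω : ℝ) (hω : 0 < ω)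
    (hδ1 : δ1 ≠ 0) (hδ2 : δ2 ≠ 0)
    (htri1 : 1 ≤ ‖δ1‖ + ‖δ2‖)
    (htri2 : -1 ≤ ‖δ1‖ - ‖δ2‖)
    (htri3 : ‖δ1‖ - ‖δ2‖ ≤ 1)
    (θ1 θ2 : ℝ)
    (hθ1 : θ1 = Real.arccos
      ((1 + ‖δ1‖ ^ 2 - ‖δ2‖ ^ 2) / (2 * ‖δ1‖)))
    (hθ2 : θ2 = Real.arccos
      ((1 + ‖δ2‖ ^ 2 - ‖δ1‖ ^ 2) / (2 * ‖δ2‖)))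
    (ε : ℝ) (hε : ε = 1 ∨ ε = -1)
    (u v : ℤ)
    (τ1 τ2 : ℝ)
    (hτ1def : τ1 = (Complex.arg δ1 + (2 * (u : ℝ) - 1) * Real.pi + ε * θ1) / ω)
    (hτ2def : τ2 = (Complex.arg δ2 + (2 * (v : ℝ) - 1) * Real.pi - ε * θ2) / ω)
    (hτ1 : 0 ≤ τ1) (hτ2 : 0 ≤ τ2) :
    1 + δ1 * Complex.exp (-(I * (ω : ℂ) * (τ1 : ℂ)))
      + δ2 * Complex.exp (-(I * (ω : ℂ) * (τ2 : ℂ))) = 0 :=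
  stability_crossing_curves_general δ1 δ2 ω hω hδ1 hδ2 htri1 htri2 htri3 θ1 θ2 hθ1 hθ2 ε hε u v τ1
    τ2 hτ1def hτ2def
end
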